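/- arXiv:0805.4112 — 5 statements merged into one kernel-verified Lean document; each statement's English description precedes it below -/
import Mathlib

section
/- If R is an ultra log-concave probability mass function on ℤ≥0 with mean λ > 0, then its size-biased version R^#(x) = (x+1)·R(x+1)/λ is also ultra log-concave. -/
/-!
Ultra log-concavity is invariant under scaling by `1 / λ`, and for the sequence `(x + 1) R(x + 1)`
its inequality at `x` is the inequality of `R` at `x + 1` multiplied by `x (x + 1) ≥ 0`.
-/

def UltraLogConcave (R : ℕ → ℝ) : Prop :=
  ∀ x : ℕ, 1 ≤ x → (x : ℝ) * R x ^ 2 ≥ ((x : ℝ) + 1) * R (x + 1) * R (x - 1)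

noncomputable def sizeBias (R : ℕ → ℝ) (lam : ℝ) (x : ℕ) : ℝ :=
  ((x : ℝ) + 1) * R (x + 1) / lam

namespace UltraLogConcave

variable {R : ℕ → ℝ}

theorem div_const (h : UltraLogConcave R) (c : ℝ) : UltraLogConcave (fun x ↦ R x / c) := by
  intro x hx
  have hscaled := mul_le_mul_of_nonneg_left (h x hx) (sq_nonneg c⁻¹)
  exact (le_of_eq (by ring)).trans (hscaled.trans (le_of_eq (by ring)))

theorem succ_mul_shift (h : UltraLogConcave R) :
    UltraLogConcave (fun x ↦ ((x : ℝ) + 1) * R (x + 1)) := by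
  intro x hx
  obtain ⟨n, rfl⟩ := Nat.exists_eq_add_of_le' hx
  have hscaled := mul_le_mul_of_nonneg_left (h (n + 2) le_add_self)
    (by positivity : (0 : ℝ) ≤ (n + 1) * (n + 2))
  simp only [Nat.add_sub_cancel] at hscaled ⊢
  push_cast at hscaled ⊢
  exact (le_of_eq (by ring)).trans (hscaled.trans (le_of_eq (by ring)))

theorem sizeBias (h : UltraLogConcave R) (lam : ℝ) : UltraLogConcave (sizeBias R lam) :=
  h.succ_mul_shift.div_const lam

end UltraLogConcave

theorem sizeBiased_ulc_general (R : ℕ → ℝ) (lam : ℝ)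
    (hULC : ∀ x : ℕ, 1 ≤ x → (x : ℝ) * R x ^ 2 ≥ ((x : ℝ) + 1) * R (x + 1) * R (x - 1)) :
    ∀ x : ℕ, 1 ≤ x →
      (x : ℝ) * (((x : ℝ) + 1) * R (x + 1) / lam) ^ 2 ≥
        ((x : ℝ) + 1) * ((((x : ℝ) + 1) + 1) * R ((x + 1) + 1) / lam) *
          ((((x : ℝ) - 1) + 1) * R ((x - 1) + 1) / lam) := by
  intro x hx
  simpa [sizeBias, Nat.cast_sub hx] using UltraLogConcave.sizeBias hULC lam x hx

/-- Size-biasing preserves ultra log-concavity. -/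
theorem sizeBiased_ulc (R : ℕ → ℝ) (lam : ℝ) (hlam : 0 < lam)
    (hnonneg : ∀ x, 0 ≤ R x) (hsum : ∑' x, R x = 1)
    (hmean : ∑' x : ℕ, (x : ℝ) * R x = lam)
    (hULC : ∀ x : ℕ, 1 ≤ x → (x : ℝ) * R x ^ 2 ≥ ((x : ℝ) + 1) * R (x + 1) * R (x - 1)) :
    ∀ x : ℕ, 1 ≤ x →
      (x : ℝ) * (((x : ℝ) + 1) * R (x + 1) / lam) ^ 2 ≥
        ((x : ℝ) + 1) * ((((x : ℝ) + 1) + 1) * R ((x + 1) + 1) / lam) *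
          ((((x : ℝ) - 1) + 1) * R ((x - 1) + 1) / lam) :=
  sizeBiased_ulc_general R lam hULC
end

section
/- Let Q be a log-concave probability mass function on ℕ = {1,2,...}. Then for all integers m ≥ n ≥ 0 and all x, Q^{*m}(x+1)·Q^{*n}(x) ≥ Q^{*m}(x)·Q^{*n}(x+1), where Q^{*k} denotes the k-fold convolution of Q (with Q^{*0} the point mass at 0). -/
/-!
A nonnegative sequence `f` on `ℕ` is log-concave with interval support exactly when its Toeplitz
kernel `(x, y) ↦ f (x - y)` is totally positive of order 2. Convolution of sequences is
composition of their Toeplitz kernels, and by the Cauchy–Binet formula for `2 × 2` minors a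
composition of TP2 kernels is TP2; hence every `Q^{*n}` is TP2. Writing
`Q^{*m} = Q^{*(m-n)} * Q^{*n}`, the difference of the two sides of the inequality is a sum of
`2 × 2` minors of the kernel of `Q^{*n}` with the nonnegative weights `Q^{*(m-n)}(y)`.
-/

/-- k-fold convolution power of a pmf on the nonnegative integers. -/
noncomputable def convPow (Q : ℕ → ℝ) : ℕ → ℕ → ℝ
  | 0 => fun x => if x = 0 then 1 else 0
  | n + 1 => fun x => ∑ y ∈ Finset.range (x + 1), Q y * convPow Q n (x - y)

open Finset PowerSeries

section TotallyPositive

variable {R : Type*} [CommRing R] [LinearOrder R] [IsStrictOrderedRing R]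

def TotallyPositive2 {α β : Type*} [Preorder α] [Preorder β] (K : α → β → R) : Prop :=
  ∀ ⦃x₁ x₂ y₁ y₂⦄, x₁ ≤ x₂ → y₁ ≤ y₂ → K x₁ y₂ * K x₂ y₁ ≤ K x₁ y₁ * K x₂ y₂

theorem TotallyPositive2.sum_mul {α β γ : Type*} [Preorder α] [LinearOrder β] [Preorder γ]
    {K : α → β → R} {L : β → γ → R} (hK : TotallyPositive2 K) (hL : TotallyPositive2 L)
    (s : Finset β) : TotallyPositive2 fun x z ↦ ∑ y ∈ s, K x y * L y z := by
  intro x₁ x₂ z₁ z₂ hx hz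
  set M : β → β → R := fun y y' ↦ L y z₁ * L y' z₂ - L y z₂ * L y' z₁
  have hdiff : (∑ y ∈ s, K x₁ y * L y z₁) * (∑ y ∈ s, K x₂ y * L y z₂) -
      (∑ y ∈ s, K x₁ y * L y z₂) * (∑ y ∈ s, K x₂ y * L y z₁) =
      ∑ y ∈ s, ∑ y' ∈ s, K x₁ y * K x₂ y' * M y y' := by
    simp only [sum_mul_sum, ← sum_sub_distrib, M]
    exact sum_congr rfl fun _ _ ↦ sum_congr rfl fun _ _ ↦ by ring
  -- Cauchy–Binet: symmetrizing in `y, y'` turns each term into a product of two 2×2 minors.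
  have hsymm : 2 * ∑ y ∈ s, ∑ y' ∈ s, K x₁ y * K x₂ y' * M y y' =
      ∑ y ∈ s, ∑ y' ∈ s, (K x₁ y * K x₂ y' - K x₁ y' * K x₂ y) * M y y' := by
    rw [two_mul]
    nth_rewrite 2 [sum_comm]
    simp only [← sum_add_distrib, M]
    exact sum_congr rfl fun _ _ ↦ sum_congr rfl fun _ _ ↦ by ring
  have hminors : ∀ y y', 0 ≤ (K x₁ y * K x₂ y' - K x₁ y' * K x₂ y) * M y y' := by
    intro y y'
    rcases le_total y y' with h | h
    · exact mul_nonneg (sub_nonneg.2 (hK hx h)) (sub_nonneg.2 (hL h hz))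
    · refine mul_nonneg_of_nonpos_of_nonpos (sub_nonpos.2 (hK hx h)) ?_
      linarith [hL h hz, mul_comm (L y z₁) (L y' z₂), mul_comm (L y z₂) (L y' z₁)]
  have hsum := sum_nonneg fun y (_ : y ∈ s) ↦ sum_nonneg fun y' (_ : y' ∈ s) ↦ hminors y y'
  linarith

end TotallyPositive

section Toeplitz

variable {R : Type*} [CommSemiring R]

def toeplitzKernel (f : ℕ → R) (x y : ℕ) : R := if y ≤ x then f (x - y) else 0

@[simp]
theorem toeplitzKernel_zero_right (f : ℕ → R) (x : ℕ) : toeplitzKernel f x 0 = f x := by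
  simp [toeplitzKernel]

theorem toeplitzKernel_coeff_mul (φ ψ : R⟦X⟧) {x N : ℕ} (hx : x < N) (z : ℕ) :
    toeplitzKernel (coeff · (φ * ψ)) x z =
      ∑ y ∈ range N, toeplitzKernel (coeff · φ) x y * toeplitzKernel (coeff · ψ) y z := by
  have hIco : ∑ y ∈ range N, toeplitzKernel (coeff · φ) x y * toeplitzKernel (coeff · ψ) y z =
      ∑ y ∈ Ico z (x + 1), coeff (x - y) φ * coeff (y - z) ψ := by
    symm
    refine sum_subset_zero_on_sdiff (fun y hy ↦ ?_) (fun y hy ↦ ?_) (fun y hy ↦ ?_)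
    · simp only [mem_Ico, mem_range] at hy ⊢; omega
    · simp only [mem_sdiff, mem_Ico, mem_range] at hy
      simp only [toeplitzKernel]
      split_ifs <;> first | omega | simp
    · simp only [mem_Ico] at hy
      simp [toeplitzKernel, show y ≤ x by omega, hy.1]
  rw [hIco, toeplitzKernel]
  split_ifs with hzx
  · rw [mul_comm φ, coeff_mul, Nat.sum_antidiagonal_eq_sum_range_succ
      (fun i j ↦ coeff i ψ * coeff j φ), sum_Ico_eq_sum_range,
      show x + 1 - z = (x - z).succ by omega]
    refine sum_congr rfl fun k _ ↦ ?_
    rw [mul_comm, Nat.add_sub_cancel_left, Nat.sub_sub]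
  · rw [Ico_eq_empty (by omega), sum_empty]

end Toeplitz

section LogConcave

variable {R : Type*} [CommRing R] [LinearOrder R] [IsStrictOrderedRing R] {f : ℕ → R}

theorem mul_succ_le_succ_mul_of_pos (hf : ∀ n, 0 ≤ f n)
    (hf_sq : ∀ n, f n * f (n + 2) ≤ f (n + 1) ^ 2) {a b : ℕ} (hab : a ≤ b)
    (hpos : ∀ i, a ≤ i → i ≤ b → 0 < f i) : f a * f (b + 1) ≤ f (a + 1) * f b := by
  induction b, hab using Nat.le_induction with
  | base => rw [mul_comm]
  | succ b hab ih =>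
    have hb : 0 < f b := hpos b hab (by omega)
    refine le_of_mul_le_mul_left ?_ hb
    calc f b * (f a * f (b + 2))
        = f a * (f b * f (b + 2)) := by ring
      _ ≤ f a * f (b + 1) ^ 2 := mul_le_mul_of_nonneg_left (hf_sq b) (hf a)
      _ = f (b + 1) * (f a * f (b + 1)) := by ring
      _ ≤ f (b + 1) * (f (a + 1) * f b) :=
          mul_le_mul_of_nonneg_left (ih fun i hi hi' ↦ hpos i hi (by omega)) (hf _)
      _ = f b * (f (a + 1) * f (b + 1)) := by ring

theorem mul_add_le_add_mul_of_pos (hf : ∀ n, 0 ≤ f n)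
    (hf_sq : ∀ n, f n * f (n + 2) ≤ f (n + 1) ^ 2) {a b : ℕ} (hab : a ≤ b) (d : ℕ)
    (hpos : ∀ i, a ≤ i → i ≤ b + d → 0 < f i) : f a * f (b + d) ≤ f (a + d) * f b := by
  induction d with
  | zero => rw [add_zero, add_zero, mul_comm]
  | succ d ih =>
    have had : 0 < f (a + d) := hpos _ (by omega) (by omega)
    have hstep : f (a + d) * f (b + d + 1) ≤ f (a + d + 1) * f (b + d) :=
      mul_succ_le_succ_mul_of_pos hf hf_sq (by omega) fun i hi hi' ↦ hpos i (by omega) (by omega)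
    refine le_of_mul_le_mul_left ?_ had
    calc f (a + d) * (f a * f (b + d + 1))
        = f a * (f (a + d) * f (b + d + 1)) := by ring
      _ ≤ f a * (f (a + d + 1) * f (b + d)) := mul_le_mul_of_nonneg_left hstep (hf a)
      _ = f (a + d + 1) * (f a * f (b + d)) := by ring
      _ ≤ f (a + d + 1) * (f (a + d) * f b) :=
          mul_le_mul_of_nonneg_left (ih fun i hi hi' ↦ hpos i hi (by omega)) (hf _)
      _ = f (a + d) * (f (a + d + 1) * f b) := by ring

theorem mul_add_le_add_mul_of_sq_le (hf : ∀ n, 0 ≤ f n)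
    (hf_supp : ∀ a b c : ℕ, a ≤ b → b ≤ c → 0 < f a → 0 < f c → 0 < f b)
    (hf_sq : ∀ n, f n * f (n + 2) ≤ f (n + 1) ^ 2) {a b : ℕ} (hab : a ≤ b) (d : ℕ) :
    f a * f (b + d) ≤ f (a + d) * f b := by
  rcases (hf a).eq_or_lt with ha | ha
  · rw [← ha, zero_mul]; exact mul_nonneg (hf _) (hf _)
  rcases (hf (b + d)).eq_or_lt with hbd | hbd
  · rw [← hbd, mul_zero]; exact mul_nonneg (hf _) (hf _)
  exact mul_add_le_add_mul_of_pos hf hf_sq hab d fun i hi hi' ↦ hf_supp a i (b + d) hi hi' ha hbd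

end LogConcave

namespace PowerSeries

variable {R : Type*} [CommRing R] [LinearOrder R] [IsStrictOrderedRing R]

def IsPF2 (φ : R⟦X⟧) : Prop := TotallyPositive2 (toeplitzKernel (coeff · φ))

theorem isPF2_one : IsPF2 (1 : R⟦X⟧) := by
  intro x₁ x₂ y₁ y₂ hx hy
  simp only [toeplitzKernel, coeff_one]
  split_ifs <;> first | omega | simp

theorem IsPF2.mul {φ ψ : R⟦X⟧} (hφ : IsPF2 φ) (hψ : IsPF2 ψ) : IsPF2 (φ * ψ) := by
  intro x₁ x₂ z₁ z₂ hx hz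
  have h := TotallyPositive2.sum_mul hφ hψ (range (x₂ + 1)) hx hz
  simpa only [← toeplitzKernel_coeff_mul φ ψ (Nat.lt_succ_of_le hx),
    ← toeplitzKernel_coeff_mul φ ψ (Nat.lt_succ_self x₂)] using h

theorem IsPF2.pow {φ : R⟦X⟧} (hφ : IsPF2 φ) (n : ℕ) : IsPF2 (φ ^ n) := by
  induction n with
  | zero => exact isPF2_one
  | succ n ih => rw [pow_succ]; exact ih.mul hφ

theorem IsPF2.coeff_mul_mul_coeff_succ_le {φ ψ : R⟦X⟧} (hφ : ∀ n, 0 ≤ coeff n φ)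
    (hψ : IsPF2 ψ) (x : ℕ) :
    coeff x (φ * ψ) * coeff (x + 1) ψ ≤ coeff (x + 1) (φ * ψ) * coeff x ψ := by
  set K := toeplitzKernel (coeff · ψ)
  have hK : ∀ x', x' < x + 2 → coeff x' (φ * ψ) = ∑ y ∈ range (x + 2), K x' y * coeff y φ :=
    fun x' hx' ↦ by simpa [mul_comm φ] using toeplitzKernel_coeff_mul ψ φ hx' 0
  rw [hK x (by omega), hK (x + 1) (by omega), sum_mul, sum_mul]
  refine sum_le_sum fun y _ ↦ ?_
  have h : K x y * coeff (x + 1) ψ ≤ coeff x ψ * K (x + 1) y := by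
    simpa only [K, toeplitzKernel_zero_right] using hψ (Nat.le_succ x) (Nat.zero_le y)
  calc K x y * coeff y φ * coeff (x + 1) ψ
      = K x y * coeff (x + 1) ψ * coeff y φ := by ring
    _ ≤ coeff x ψ * K (x + 1) y * coeff y φ := mul_le_mul_of_nonneg_right h (hφ y)
    _ = K (x + 1) y * coeff y φ * coeff x ψ := by ring

theorem isPF2_mk_of_sq_le {f : ℕ → R} (hf : ∀ n, 0 ≤ f n)
    (hf_supp : ∀ a b c : ℕ, a ≤ b → b ≤ c → 0 < f a → 0 < f c → 0 < f b)
    (hf_sq : ∀ n, f n * f (n + 2) ≤ f (n + 1) ^ 2) : IsPF2 (mk f) := by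
  intro x₁ x₂ y₁ y₂ hx hy
  by_cases hxy : y₂ ≤ x₁
  · have key := mul_add_le_add_mul_of_sq_le hf hf_supp hf_sq (a := x₁ - y₂) (b := x₂ - y₂)
      (by omega) (y₂ - y₁)
    rw [show x₁ - y₂ + (y₂ - y₁) = x₁ - y₁ by omega,
      show x₂ - y₂ + (y₂ - y₁) = x₂ - y₁ by omega] at key
    simpa only [toeplitzKernel, coeff_mk, if_pos hxy, if_pos (hy.trans hxy),
      if_pos (hxy.trans hx), if_pos (hy.trans (hxy.trans hx))] using key
  · have hK : ∀ x y, 0 ≤ toeplitzKernel (coeff · (mk f)) x y := fun x y ↦ by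
      unfold toeplitzKernel; split_ifs <;> simp [hf]
    rw [toeplitzKernel, if_neg hxy, zero_mul]
    exact mul_nonneg (hK _ _) (hK _ _)

end PowerSeries

theorem convPow_eq_coeff (Q : ℕ → ℝ) (n x : ℕ) : convPow Q n x = coeff x (mk Q ^ n) := by
  induction n generalizing x with
  | zero => simp [convPow, coeff_one]
  | succ n ih =>
    rw [pow_succ', coeff_mul, Nat.sum_antidiagonal_eq_sum_range_succ_mk]
    simp [convPow, ih]

theorem convPow_nonneg {Q : ℕ → ℝ} (hQ : ∀ x, 0 ≤ Q x) (n x : ℕ) : 0 ≤ convPow Q n x := by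
  induction n generalizing x with
  | zero => unfold convPow; split_ifs <;> norm_num
  | succ n ih => exact sum_nonneg fun y _ ↦ mul_nonneg (hQ y) (ih _)

theorem convPow_ratio_mono_general (Q : ℕ → ℝ)
    (hnonneg : ∀ x, 0 ≤ Q x)
    (hintvl : ∀ a b c : ℕ, a ≤ b → b ≤ c → 0 < Q a → 0 < Q c → 0 < Q b)
    (hLC : ∀ x : ℕ, 1 ≤ x → Q x ^ 2 ≥ Q (x + 1) * Q (x - 1)) :
    ∀ m n x : ℕ, n ≤ m →
      convPow Q m (x + 1) * convPow Q n x ≥ convPow Q m x * convPow Q n (x + 1) := by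
  intro m n x hnm
  obtain ⟨k, rfl⟩ := Nat.exists_eq_add_of_le' hnm
  have hsq : ∀ x, Q x * Q (x + 2) ≤ Q (x + 1) ^ 2 := fun x ↦ by
    simpa [mul_comm] using hLC (x + 1) (by omega)
  have hPF2 : IsPF2 (mk Q ^ n) := (isPF2_mk_of_sq_le hnonneg hintvl hsq).pow n
  have hcoeff : ∀ j, 0 ≤ coeff j (mk Q ^ k) := fun j ↦
    convPow_eq_coeff Q k j ▸ convPow_nonneg hnonneg k j
  simp only [convPow_eq_coeff, pow_add, ge_iff_le]
  exact hPF2.coeff_mul_mul_coeff_succ_le hcoeff x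

/-- Keilson–Sumita: if Q is log-concave on ℕ, then for m ≥ n,
Q^{*m}(x+1)·Q^{*n}(x) ≥ Q^{*m}(x)·Q^{*n}(x+1). -/
theorem convPow_ratio_mono (Q : ℕ → ℝ)
    (hnonneg : ∀ x, 0 ≤ Q x) (hQ0 : Q 0 = 0) (hsum : ∑' x, Q x = 1)
    (hintvl : ∀ a b c : ℕ, a ≤ b → b ≤ c → 0 < Q a → 0 < Q c → 0 < Q b)
    (hLC : ∀ x : ℕ, 1 ≤ x → Q x ^ 2 ≥ Q (x + 1) * Q (x - 1)) :
    ∀ m n x : ℕ, n ≤ m →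
      convPow Q m (x + 1) * convPow Q n x ≥ convPow Q m x * convPow Q n (x + 1) :=
  convPow_ratio_mono_general Q hnonneg hintvl hLC
end

section
/- For any pmf P on ℤ≥0 and pmf Q on ℕ, if the compound distribution C_Q P is log-concave then (P(1)² − P(0)·P(2))/(P(0)·P(1)) ≥ Q(2)/Q(1)², assuming P(0), P(1), Q(1) > 0. -/
/-- The compound distribution C_Q P. -/
noncomputable def cqp (Q P : ℕ → ℝ) (x : ℕ) : ℝ := ∑' y : ℕ, P y * convPow Q y x

@[simp]
lemma convPow_zero_apply (Q : ℕ → ℝ) (x : ℕ) : convPow Q 0 x = if x = 0 then 1 else 0 := rfl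

lemma convPow_succ_apply (Q : ℕ → ℝ) (n x : ℕ) :
    convPow Q (n + 1) x = ∑ y ∈ Finset.range (x + 1), Q y * convPow Q n (x - y) := rfl

@[simp]
lemma convPow_one_apply (Q : ℕ → ℝ) (x : ℕ) : convPow Q 1 x = Q x := by
  rw [convPow_succ_apply, Finset.sum_eq_single_of_mem x (by simp)]
  · simp
  · intro y hy hyx
    have hxy : x - y ≠ 0 := by simp at hy; omega
    simp [hxy]

section PositiveSupport

variable {Q : ℕ → ℝ} (hQ0 : Q 0 = 0)
include hQ0

lemma convPow_eq_zero_of_lt {n x : ℕ} (hxn : x < n) : convPow Q n x = 0 := by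
  induction n generalizing x with
  | zero => omega
  | succ n ih =>
    rw [convPow_succ_apply]
    refine Finset.sum_eq_zero fun y hyx => ?_
    rw [Finset.mem_range] at hyx
    rcases Nat.eq_zero_or_pos y with rfl | hy
    · rw [hQ0, zero_mul]
    · rw [ih (by omega), mul_zero]

lemma convPow_self (n : ℕ) : convPow Q n n = Q 1 ^ n := by
  induction n with
  | zero => simp
  | succ n ih =>
    rw [convPow_succ_apply, Finset.sum_eq_single_of_mem 1 (by simp)]
    · simp [ih, pow_succ, mul_comm]
    · intro y hyn hy1
      rw [Finset.mem_range] at hyn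
      rcases Nat.eq_zero_or_pos y with rfl | hy
      · rw [hQ0, zero_mul]
      · rw [convPow_eq_zero_of_lt hQ0 (by omega), mul_zero]

lemma cqp_eq_sum_range (P : ℕ → ℝ) (x : ℕ) :
    cqp Q P x = ∑ y ∈ Finset.range (x + 1), P y * convPow Q y x := by
  refine tsum_eq_sum fun y hy => ?_
  rw [convPow_eq_zero_of_lt hQ0 (by simpa using hy), mul_zero]

lemma cqp_zero (P : ℕ → ℝ) : cqp Q P 0 = P 0 := by
  simp [cqp_eq_sum_range hQ0]

lemma cqp_one (P : ℕ → ℝ) : cqp Q P 1 = P 1 * Q 1 := by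
  simp [cqp_eq_sum_range hQ0, Finset.sum_range_succ]

lemma cqp_two (P : ℕ → ℝ) : cqp Q P 2 = P 1 * Q 2 + P 2 * Q 1 ^ 2 := by
  simp [cqp_eq_sum_range hQ0, Finset.sum_range_succ, convPow_self hQ0]

end PositiveSupport

theorem compound_logConcave_necessary_general (P Q : ℕ → ℝ)
    (hQ0 : Q 0 = 0)
    (hP0 : 0 < P 0) (hP1 : 0 < P 1) (hQ1 : 0 < Q 1)
    (hLC : ∀ x : ℕ, 1 ≤ x → cqp Q P x ^ 2 ≥ cqp Q P (x + 1) * cqp Q P (x - 1)) :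
    (P 1 ^ 2 - P 0 * P 2) / (P 0 * P 1) ≥ Q 2 / Q 1 ^ 2 := by
  have hLC1 := hLC 1 le_rfl
  rw [cqp_one hQ0, cqp_two hQ0, Nat.sub_self, cqp_zero hQ0] at hLC1
  rw [ge_iff_le, div_le_div_iff₀ (by positivity) (by positivity)]
  linear_combination hLC1

/-- A necessary condition for log-concavity of a compound distribution:
(P(1)² − P(0)P(2))/(P(0)P(1)) ≥ Q(2)/Q(1)². -/
theorem compound_logConcave_necessary (P Q : ℕ → ℝ)
    (hPnonneg : ∀ x, 0 ≤ P x) (hPsum : ∑' x, P x = 1)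
    (hQnonneg : ∀ x, 0 ≤ Q x) (hQ0 : Q 0 = 0) (hQsum : ∑' x, Q x = 1)
    (hP0 : 0 < P 0) (hP1 : 0 < P 1) (hQ1 : 0 < Q 1)
    (hintvl : ∀ a b c : ℕ, a ≤ b → b ≤ c →
      0 < cqp Q P a → 0 < cqp Q P c → 0 < cqp Q P b)
    (hLC : ∀ x : ℕ, 1 ≤ x → cqp Q P x ^ 2 ≥ cqp Q P (x + 1) * cqp Q P (x - 1)) :
    (P 1 ^ 2 - P 0 * P 2) / (P 0 * P 1) ≥ Q 2 / Q 1 ^ 2 :=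
  compound_logConcave_necessary_general P Q hQ0 hP0 hP1 hQ1 hLC
end

section
/- If (a_i)_{i≥0} is a log-concave sequence of nonnegative reals, then the sequence b_i = Σ_{j=0}^i binom(i,j)·a_j is also log-concave, i.e., b_i² ≥ b_{i+1}·b_{i−1} for all i ≥ 1. -/
/-!
Write `b n = ∑ j, (n choose j) * a j`. Pascal's rule gives `b (n + 1) = ∑ j, (n choose j) * c j`
with `c j = a j + a (j + 1)`, so `b (m + 1) ^ 2 - b (m + 2) * b m` is the difference
`(∑ u c)(∑ v a) - (∑ u a)(∑ v c)` for the kernels `u = (m choose ·)` and `v = (m + 1 choose ·)`.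
Symmetrizing the double sum writes it as a sum of products of two 2×2 minors, one of the kernel
pair `(u, v)` and one of the sequence pair `(c, a)`. Both pairs are TP₂: for Pascal's triangle this
is `(m choose k)(m + 1 choose j) ≤ (m choose j)(m + 1 choose k)` for `j ≤ k`, and for `(c, a)` it is
`a j * a (k + 1) ≤ a (j + 1) * a k`, which log-concavity with interval support gives by induction.
-/

open Finset

theorem sum_mul_sum_le_sum_mul_sum_of_tp2 {ι R : Type*} [LinearOrder ι] [CommRing R]
    [LinearOrder R] [IsStrictOrderedRing R] (s : Finset ι) (u v x y : ι → R)
    (huv : ∀ j k, j ≤ k → u k * v j ≤ u j * v k)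
    (hxy : ∀ j k, j ≤ k → x k * y j ≤ x j * y k) :
    (∑ j ∈ s, u j * y j) * (∑ k ∈ s, v k * x k) ≤
      (∑ j ∈ s, u j * x j) * (∑ k ∈ s, v k * y k) := by
  set F : ι → ι → R := fun j k => u j * x j * (v k * y k) - u j * y j * (v k * x k)
  have hsymm : ∀ j k, 0 ≤ F j k + F k j := by
    intro j k
    have hF : F j k + F k j = (u j * v k - u k * v j) * (x j * y k - x k * y j) := by ring
    rw [hF]
    rcases le_total j k with hjk | hkj
    · exact mul_nonneg (sub_nonneg.2 (huv j k hjk)) (sub_nonneg.2 (hxy j k hjk))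
    · exact mul_nonneg_of_nonpos_of_nonpos (sub_nonpos.2 (huv k j hkj))
        (sub_nonpos.2 (hxy k j hkj))
  have hsum : 0 ≤ ∑ j ∈ s, ∑ k ∈ s, F j k := by
    have := sum_nonneg fun j (_ : j ∈ s) => sum_nonneg fun k (_ : k ∈ s) => hsymm j k
    simp only [sum_add_distrib] at this
    rw [sum_comm (f := fun j k => F k j)] at this
    linarith
  simpa only [F, sum_sub_distrib, ← sum_mul_sum, sub_nonneg] using hsum

def binomialTransform {R : Type*} [Semiring R] (a : ℕ → R) (n : ℕ) : R :=
  ∑ j ∈ range (n + 1), (n.choose j : R) * a j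

section
variable {R : Type*} [Semiring R] (a : ℕ → R)

theorem binomialTransform_eq_sum_range {n N : ℕ} (hn : n < N) :
    binomialTransform a n = ∑ j ∈ range N, (n.choose j : R) * a j := by
  refine sum_subset (range_subset_range.2 hn) fun j _ hj => ?_
  rw [Nat.choose_eq_zero_of_lt (by simpa using hj), Nat.cast_zero, zero_mul]

theorem binomialTransform_succ (n : ℕ) :
    binomialTransform a (n + 1) = binomialTransform (fun j => a j + a (j + 1)) n := by
  have hshift : ∑ j ∈ range (n + 1), (n.choose j : R) * a j =
      ∑ j ∈ range (n + 1), (n.choose (j + 1) : R) * a (j + 1) + a 0 := by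
    rw [← binomialTransform, binomialTransform_eq_sum_range a (by omega : n < n + 2),
      sum_range_succ']
    simp
  rw [binomialTransform, sum_range_succ']
  simp only [binomialTransform, Nat.choose_succ_succ', Nat.cast_add, add_mul, mul_add,
    sum_add_distrib, Nat.choose_zero_right, Nat.cast_one, one_mul, hshift]
  abel

end

theorem choose_mul_choose_succ_le_of_le (m : ℕ) {j k : ℕ} (hjk : j ≤ k) :
    m.choose k * (m + 1).choose j ≤ m.choose j * (m + 1).choose k := by
  refine Nat.le_of_mul_le_mul_right ?_ m.succ_pos
  calc m.choose k * (m + 1).choose j * (m + 1)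
      = (m + 1).choose k * (m + 1 - k) * (m + 1).choose j := by
        rw [← Nat.choose_mul_succ_eq]; ring
    _ ≤ (m + 1).choose k * ((m + 1).choose j * (m + 1 - j)) := by
        rw [mul_right_comm, mul_assoc]; gcongr
    _ = m.choose j * (m + 1).choose k * (m + 1) := by
        rw [← Nat.choose_mul_succ_eq]; ring

theorem mul_succ_le_succ_mul_of_logConcave (a : ℕ → ℝ) (hnonneg : ∀ i, 0 ≤ a i)
    (hintvl : ∀ i j k : ℕ, i ≤ j → j ≤ k → 0 < a i → 0 < a k → 0 < a j)
    (hLC : ∀ i : ℕ, 1 ≤ i → a i ^ 2 ≥ a (i + 1) * a (i - 1)) {j k : ℕ} (hjk : j ≤ k) :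
    a j * a (k + 1) ≤ a (j + 1) * a k := by
  induction k, hjk using Nat.le_induction with
  | base => rw [mul_comm]
  | succ k hjk ih =>
    rcases (hnonneg k).lt_or_eq with hk | hk
    · have hlc : a (k + 2) * a k ≤ a (k + 1) * a (k + 1) := by
        simpa [sq] using hLC (k + 1) k.succ_pos
      refine le_of_mul_le_mul_right ?_ hk
      calc a j * a (k + 2) * a k ≤ a j * a (k + 1) * a (k + 1) := by
            rw [mul_assoc, mul_assoc]; exact mul_le_mul_of_nonneg_left hlc (hnonneg j)
        _ ≤ a (j + 1) * a k * a (k + 1) := mul_le_mul_of_nonneg_right ih (hnonneg _)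
        _ = a (j + 1) * a (k + 1) * a k := mul_right_comm _ _ _
    · have hzero : a j * a (k + 2) = 0 := by
        by_contra hne
        have hpos := (mul_nonneg (hnonneg j) (hnonneg (k + 2))).lt_of_ne' hne
        exact (hintvl j k (k + 2) hjk (by omega) (pos_of_mul_pos_left hpos (hnonneg _))
          (pos_of_mul_pos_right hpos (hnonneg _))).ne hk
      rw [hzero]
      exact mul_nonneg (hnonneg _) (hnonneg _)

theorem binomialTransform_mul_le_sq (a : ℕ → ℝ) (hnonneg : ∀ i, 0 ≤ a i)
    (hintvl : ∀ i j k : ℕ, i ≤ j → j ≤ k → 0 < a i → 0 < a k → 0 < a j)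
    (hLC : ∀ i : ℕ, 1 ≤ i → a i ^ 2 ≥ a (i + 1) * a (i - 1)) (m : ℕ) :
    binomialTransform a (m + 2) * binomialTransform a m ≤ binomialTransform a (m + 1) ^ 2 := by
  have hchoose : ∀ j k, j ≤ k →
      (m.choose k : ℝ) * (m + 1).choose j ≤ m.choose j * (m + 1).choose k := fun j k hjk => by
    exact_mod_cast choose_mul_choose_succ_le_of_le m hjk
  have hratio : ∀ j k, j ≤ k → (a k + a (k + 1)) * a j ≤ (a j + a (j + 1)) * a k :=
    fun j k hjk => by
      nlinarith [mul_succ_le_succ_mul_of_logConcave a hnonneg hintvl hLC hjk]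
  have key := sum_mul_sum_le_sum_mul_sum_of_tp2 (range (m + 2)) (fun j => (m.choose j : ℝ))
    (fun j => ((m + 1).choose j : ℝ)) (fun j => a j + a (j + 1)) a hchoose hratio
  rw [← binomialTransform_eq_sum_range a (by omega : m < m + 2),
    ← binomialTransform_eq_sum_range a (by omega : m + 1 < m + 2),
    ← binomialTransform_eq_sum_range _ (by omega : m < m + 2),
    ← binomialTransform_eq_sum_range _ (by omega : m + 1 < m + 2),
    ← binomialTransform_succ, ← binomialTransform_succ] at key
  rw [sq, mul_comm]
  exact key

/-- Binomial transform preserves log-concavity of nonnegative sequences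
(Karlin, Theorem 7.3). -/
theorem binomial_transform_logConcave (a : ℕ → ℝ)
    (hnonneg : ∀ i, 0 ≤ a i)
    (hintvl : ∀ i j k : ℕ, i ≤ j → j ≤ k → 0 < a i → 0 < a k → 0 < a j)
    (hLC : ∀ i : ℕ, 1 ≤ i → a i ^ 2 ≥ a (i + 1) * a (i - 1)) :
    ∀ i : ℕ, 1 ≤ i →
      (∑ j ∈ Finset.range (i + 1), (Nat.choose i j : ℝ) * a j) ^ 2 ≥
        (∑ j ∈ Finset.range (i + 2), (Nat.choose (i + 1) j : ℝ) * a j) *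
          (∑ j ∈ Finset.range i, (Nat.choose (i - 1) j : ℝ) * a j) := by
  intro i hi
  obtain ⟨m, rfl⟩ := Nat.exists_eq_add_of_le' hi
  exact binomialTransform_mul_le_sq a hnonneg hintvl hLC m
end

section
/- Let f(T) = (1+T²)^a·(1+T)^{2b} be a polynomial with a, b nonnegative integers and b ≥ 1, of degree 2a + 2b = 2x. Then the coefficient of T^x in f is at least the coefficient of T^{x+1}; equivalently, the coefficient sequence of f is unimodal (symmetric about degree x). -/
/-!
Multiplication by `1 + X` preserves unimodality of a nonnegative coefficient sequence: the
product's sequence is the sum of the old one and its shift, two unimodal sequences whose peaks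
are adjacent. The coefficients of `(1 + X) (1 + X²)^a` are `choose a ⌊k/2⌋`, which are unimodal,
so `f = (1 + X)^(2b-1) · (1 + X) (1 + X²)^a` has unimodal coefficients. As `f` is palindromic of
degree `2x`, its coefficients at `x - 1` and `x + 1` agree, and unimodality then forces the
coefficient at `x` to be at least as large.
-/

open Polynomial

theorem Nat.choose_succ_le_of_half_le {n r : ℕ} (h : n / 2 ≤ r) :
    n.choose (r + 1) ≤ n.choose r := by
  have hmul := Nat.choose_succ_right_eq n r
  have hle : n - r ≤ r + 1 := by omega
  exact Nat.le_of_mul_le_mul_right (hmul ▸ Nat.mul_le_mul_left _ hle) r.succ_pos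

def IsUnimodalAt {α : Type*} [Preorder α] (c : ℕ → α) (m : ℕ) : Prop :=
  (∀ k < m, c k ≤ c (k + 1)) ∧ ∀ k, m ≤ k → c (k + 1) ≤ c k

namespace IsUnimodalAt

section Preorder

variable {α : Type*} [Preorder α] {c : ℕ → α} {m : ℕ}

theorem comp_div_two (hc : IsUnimodalAt c m) : IsUnimodalAt (fun k ↦ c (k / 2)) (2 * m) := by
  constructor
  · intro k hk
    rcases (by omega : (k + 1) / 2 = k / 2 ∨ (k + 1) / 2 = k / 2 + 1) with h | h
    · simp only [h, le_refl]
    · simpa only [h] using hc.1 (k / 2) (by omega)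
  · intro k hk
    rcases (by omega : (k + 1) / 2 = k / 2 ∨ (k + 1) / 2 = k / 2 + 1) with h | h
    · simp only [h, le_refl]
    · simpa only [h] using hc.2 (k / 2) (by omega)

theorem add_two_le_add_one_of_eq (hc : IsUnimodalAt c m) {y : ℕ} (h : c (y + 2) = c y) :
    c (y + 2) ≤ c (y + 1) := by
  rcases le_or_gt m (y + 1) with hm | hm
  · exact hc.2 (y + 1) hm
  · exact h ▸ hc.1 y (by omega)

end Preorder

theorem add_of_succ {α : Type*} [AddCommMonoid α] [LinearOrder α] [IsOrderedAddMonoid α]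
    {u v : ℕ → α} {m : ℕ} (hu : IsUnimodalAt u m) (hv : IsUnimodalAt v (m + 1)) :
    ∃ n, IsUnimodalAt (u + v) n := by
  rcases le_total ((u + v) m) ((u + v) (m + 1)) with hup | hdown
  · refine ⟨m + 1, fun k hk ↦ ?_, fun k hk ↦ add_le_add (hu.2 k (by omega)) (hv.2 k hk)⟩
    rcases (by omega : k < m ∨ k = m) with hk | rfl
    · exact add_le_add (hu.1 k hk) (hv.1 k (by omega))
    · exact hup
  · refine ⟨m, fun k hk ↦ add_le_add (hu.1 k hk) (hv.1 k (by omega)), fun k hk ↦ ?_⟩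
    rcases (by omega : k = m ∨ m + 1 ≤ k) with rfl | hk
    · exact hdown
    · exact add_le_add (hu.2 k (by omega)) (hv.2 k hk)

end IsUnimodalAt

theorem isUnimodalAt_choose {R : Type*} [Semiring R] [PartialOrder R] [IsOrderedRing R] (n : ℕ) :
    IsUnimodalAt (fun r ↦ (n.choose r : R)) (n / 2) :=
  ⟨fun _ hr ↦ Nat.mono_cast (Nat.choose_le_succ_of_lt_half_left hr),
    fun _ hr ↦ Nat.mono_cast (Nat.choose_succ_le_of_half_le hr)⟩

namespace Polynomial

section Semiring

variable {R : Type*} [Semiring R]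

theorem reflect_pow_of_reflect_eq {p : R[X]} {N : ℕ} (hdeg : p.natDegree ≤ N)
    (hp : reflect N p = p) (n : ℕ) : reflect (n * N) (p ^ n) = p ^ n := by
  induction n with
  | zero => simp
  | succ n ih =>
    rw [pow_succ, add_one_mul, reflect_mul _ _ (natDegree_pow_le_of_le n hdeg) hdeg, ih, hp]

theorem reflect_one_add_X_sq_pow_mul_one_add_X_pow (a n : ℕ) :
    reflect (2 * a + n) ((1 + X ^ 2 : R[X]) ^ a * (1 + X) ^ n) =
      (1 + X ^ 2) ^ a * (1 + X) ^ n := by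
  have h2 : reflect 2 (1 + X ^ 2 : R[X]) = 1 + X ^ 2 := by
    simp [reflect_add, reflect_one, reflect_monomial, revAt_le, add_comm]
  have h1 : reflect 1 (1 + X : R[X]) = 1 + X := by
    simp [reflect_add, reflect_one, add_comm]
  have h2deg : (1 + X ^ 2 : R[X]).natDegree ≤ 2 := by compute_degree
  have h1deg : (1 + X : R[X]).natDegree ≤ 1 := by compute_degree
  rw [show 2 * a + n = a * 2 + n * 1 by ring,
    reflect_mul _ _ (natDegree_pow_le_of_le a h2deg) (natDegree_pow_le_of_le n h1deg),
    reflect_pow_of_reflect_eq h2deg h2, reflect_pow_of_reflect_eq h1deg h1]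

theorem isUnimodalAt_coeff_X_mul [Preorder R] {p : R[X]} {m : ℕ}
    (hp : IsUnimodalAt p.coeff m) (h0 : 0 ≤ p.coeff 0) : IsUnimodalAt (X * p).coeff (m + 1) := by
  constructor
  · rintro (_ | k) hk
    · simpa only [coeff_X_mul_zero, zero_add, coeff_X_mul] using h0
    · simpa only [coeff_X_mul] using hp.1 k (by omega)
  · rintro (_ | k) hk
    · omega
    · simpa only [coeff_X_mul] using hp.2 k (by omega)

variable [LinearOrder R] [IsOrderedAddMonoid R]

theorem exists_isUnimodalAt_coeff_one_add_X_pow_mul {p : R[X]} {m : ℕ}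
    (hp : IsUnimodalAt p.coeff m) (h0 : 0 ≤ p.coeff 0) (n : ℕ) :
    ∃ k, IsUnimodalAt ((1 + X) ^ n * p).coeff k := by
  induction n with
  | zero => exact ⟨m, by simpa using hp⟩
  | succ n ih =>
    obtain ⟨k, hk⟩ := ih
    have hk0 : 0 ≤ ((1 + X) ^ n * p).coeff 0 := by
      simpa [mul_coeff_zero, coeff_one_add_X_pow] using h0
    have hsplit : ((1 + X) ^ (n + 1) * p).coeff
        = ((1 + X) ^ n * p).coeff + (X * ((1 + X) ^ n * p)).coeff := by
      ext i; simp only [pow_succ', mul_assoc, add_mul, one_mul, coeff_add, Pi.add_apply]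
    rw [hsplit]
    exact hk.add_of_succ (isUnimodalAt_coeff_X_mul hk hk0)

end Semiring

theorem coeff_one_add_X_mul_expand_two {R : Type*} [CommSemiring R] (p : R[X]) (k : ℕ) :
    ((1 + X) * expand R 2 p).coeff k = p.coeff (k / 2) := by
  rcases k with _ | k
  · simp [coeff_expand]
  · rw [add_mul, one_mul, coeff_add, coeff_X_mul, coeff_expand two_pos, coeff_expand two_pos]
    rcases Nat.even_or_odd k with ⟨j, rfl⟩ | ⟨j, rfl⟩
    · rw [if_neg (by omega), if_pos (by omega), zero_add,
        show (j + j + 1) / 2 = (j + j) / 2 by omega]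
    · rw [if_pos (by omega), if_neg (by omega), add_zero]

theorem coeff_one_add_X_mul_one_add_X_sq_pow {R : Type*} [CommSemiring R] (a k : ℕ) :
    ((1 + X) * (1 + X ^ 2 : R[X]) ^ a).coeff k = (a.choose (k / 2) : R) := by
  rw [show (1 + X ^ 2 : R[X]) ^ a = expand R 2 ((1 + X) ^ a) by simp,
    coeff_one_add_X_mul_expand_two, coeff_one_add_X_pow]

theorem isUnimodalAt_coeff_one_add_X_mul_one_add_X_sq_pow {R : Type*} [CommSemiring R]
    [PartialOrder R] [IsOrderedRing R] (a : ℕ) :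
    IsUnimodalAt ((1 + X) * (1 + X ^ 2 : R[X]) ^ a).coeff (2 * (a / 2)) := by
  rw [_root_.funext (coeff_one_add_X_mul_one_add_X_sq_pow a)]
  exact (isUnimodalAt_choose a).comp_div_two

end Polynomial

/-- For f(T) = (1+T²)^a (1+T)^{2b} with b ≥ 1 and degree 2a+2b = 2x, the
coefficient of T^x is at least the coefficient of T^{x+1}. -/
theorem middle_coeff_ge (a b x : ℕ) (hb : 1 ≤ b) (hx : 2 * a + 2 * b = 2 * x) :
    ((1 + X ^ 2 : Polynomial ℝ) ^ a * (1 + X) ^ (2 * b)).coeff (x + 1) ≤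
      ((1 + X ^ 2 : Polynomial ℝ) ^ a * (1 + X) ^ (2 * b)).coeff x := by
  obtain ⟨y, rfl⟩ : ∃ y, x = y + 1 := ⟨x - 1, by omega⟩
  set f : ℝ[X] := (1 + X ^ 2) ^ a * (1 + X) ^ (2 * b) with hf
  obtain ⟨m, hm⟩ : ∃ m, IsUnimodalAt f.coeff m := by
    have hsplit : f = (1 + X) ^ (2 * b - 1) * ((1 + X) * (1 + X ^ 2) ^ a) := by
      rw [hf, ← mul_assoc, ← pow_succ, Nat.sub_add_cancel (by omega), mul_comm]
    rw [hsplit]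
    refine exists_isUnimodalAt_coeff_one_add_X_pow_mul
      (isUnimodalAt_coeff_one_add_X_mul_one_add_X_sq_pow a) ?_ _
    rw [coeff_one_add_X_mul_one_add_X_sq_pow]
    positivity
  have hpalindromic : reflect (2 * (y + 1)) f = f :=
    hx ▸ reflect_one_add_X_sq_pow_mul_one_add_X_pow a (2 * b)
  have hsymm : f.coeff (y + 2) = f.coeff y := by
    rw [← hpalindromic, coeff_reflect, revAt_le (by omega), hpalindromic]
    congr 1
    omega
  exact hm.add_two_le_add_one_of_eq hsymm
end
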